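/- Suppose $u \in L^1_{uloc}(\mathbb{R}^3)$ satisfies $\lim_{|x_0| \to \infty} \int_{Q_1(x_0)} |u - (u)_{Q_1(x_0)}|\,dx = 0$. Then for every $r > 0$, $\lim_{|x_0| \to \infty} \sup_{y \in \overline{Q_{2r}(x_0)}} |(u)_{Q_r(y)} - (u)_{Q_r(x_0)}| = 0$. -/

import Mathlib

/-! Cover `Q_{2s}(x)` by the eight closed octant cubes of half its side. Each octant cube `Q_s(a)`
shares the cube `Q_{s/2}((x + a)/2)` with `Q_s(x)`, so the two averages differ by at most
`(osc Q_s(a) + osc Q_s(x)) / s³`; hence the mean oscillation at scale `2s` is at most `272`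
times the largest one at scale `s`. Iterating from unit cubes, the mean oscillation over
`Q_{2ⁿ}(x₀)` is small once `x₀` is far out. For `3r < 2ⁿ` the cubes `Q_r(y)`, `y ∈ Q̄_{2r}(x₀)`,
lie in `Q_{2ⁿ}(x₀)`, so each of their averages is within `osc Q_{2ⁿ}(x₀) / (2r)³` of the
average over `Q_{2ⁿ}(x₀)`. -/

open MeasureTheory Metric Filter

noncomputable section

/-- Open cube in `ℝ³` centered at `x` with side length `2r`. -/
def cube (x : EuclideanSpace ℝ (Fin 3)) (r : ℝ) : Set (EuclideanSpace ℝ (Fin 3)) :=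
  {y | ∀ i, |y i - x i| < r}

/-- Closed cube in `ℝ³` centered at `x` with side length `2r`. -/
def closedCube (x : EuclideanSpace ℝ (Fin 3)) (r : ℝ) : Set (EuclideanSpace ℝ (Fin 3)) :=
  {y | ∀ i, |y i - x i| ≤ r}

section SetAverage

variable {α : Type*} [MeasurableSpace α] {μ : Measure α} {f : α → ℝ} {s t : Set α}

theorem integrableOn_abs_sub_const (hs : μ s ≠ ⊤) (hf : IntegrableOn f s μ) (c : ℝ) :
    IntegrableOn (fun x => |f x - c|) s μ :=
  (hf.sub (integrableOn_const hs)).abs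

theorem setIntegral_abs_sub_le_add (hs : μ s ≠ ⊤) (hf : IntegrableOn f s μ) (c c' : ℝ) :
    ∫ x in s, |f x - c| ∂μ ≤ ∫ x in s, |f x - c'| ∂μ + μ.real s * |c' - c| := by
  have hc : IntegrableOn (fun _ => |c' - c|) s μ := integrableOn_const hs
  calc ∫ x in s, |f x - c| ∂μ ≤ ∫ x in s, (|f x - c'| + |c' - c|) ∂μ :=
        integral_mono (integrableOn_abs_sub_const hs hf c)
          ((integrableOn_abs_sub_const hs hf c').add hc) fun x => abs_sub_le _ _ _
    _ = ∫ x in s, |f x - c'| ∂μ + μ.real s * |c' - c| := by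
        rw [integral_add (integrableOn_abs_sub_const hs hf c') hc, setIntegral_const, smul_eq_mul]

theorem measureReal_mul_abs_setAverage_sub_le (hts : t ⊆ s) (hs : μ s ≠ ⊤)
    (hf : IntegrableOn f s μ) (c : ℝ) :
    μ.real t * |(⨍ x in t, f x ∂μ) - c| ≤ ∫ x in s, |f x - c| ∂μ := by
  have ht : μ t ≠ ⊤ := ((measure_mono hts).trans_lt hs.lt_top).ne
  calc μ.real t * |(⨍ x in t, f x ∂μ) - c| = |∫ x in t, (f x - c) ∂μ| := by
        rw [integral_sub (hf.mono_set hts) (integrableOn_const ht), setIntegral_const,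
          ← measure_smul_setAverage f ht, smul_eq_mul, smul_eq_mul, ← mul_sub, abs_mul,
          abs_of_nonneg measureReal_nonneg]
    _ ≤ ∫ x in t, |f x - c| ∂μ := abs_integral_le_integral_abs
    _ ≤ ∫ x in s, |f x - c| ∂μ :=
        setIntegral_mono_set (integrableOn_abs_sub_const hs hf c)
          (ae_of_all _ fun _ => abs_nonneg _) (ae_of_all _ hts)

theorem setIntegral_abs_sub_setAverage_le (hs : μ s ≠ ⊤) (hf : IntegrableOn f s μ) (c : ℝ) :
    ∫ x in s, |f x - ⨍ y in s, f y ∂μ| ∂μ ≤ 2 * ∫ x in s, |f x - c| ∂μ := by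
  have h := measureReal_mul_abs_setAverage_sub_le subset_rfl hs hf c
  rw [abs_sub_comm] at h
  linarith [setIntegral_abs_sub_le_add hs hf (⨍ y in s, f y ∂μ) c]

theorem setIntegral_le_sum_of_subset_iUnion {ι : Type*} [Fintype ι] {S : ι → Set α}
    (hsS : s ⊆ ⋃ i, S i) (hf : ∀ x, 0 ≤ f x) (hfS : ∀ i, IntegrableOn f (S i) μ) :
    ∫ x in s, f x ∂μ ≤ ∑ i, ∫ x in S i, f x ∂μ := by
  have hle : μ.restrict s ≤ ∑ i, μ.restrict (S i) :=
    (Measure.restrict_mono hsS le_rfl).trans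
      (Measure.restrict_iUnion_le.trans_eq (Measure.sum_fintype _))
  calc ∫ x in s, f x ∂μ ≤ ∫ x, f x ∂(∑ i, μ.restrict (S i)) :=
        integral_mono_measure hle (ae_of_all _ hf)
          (integrable_finsetSum_measure.2 fun i _ => hfS i)
    _ = ∑ i, ∫ x in S i, f x ∂μ := integral_finsetSum_measure fun i _ => hfS i

end SetAverage

local notation "ℝ³" => EuclideanSpace ℝ (Fin 3)

section Cubes

theorem cube_eq_preimage_pi (x : ℝ³) (r : ℝ) :
    cube x r = (MeasurableEquiv.toLp 2 (Fin 3 → ℝ)).symm ⁻¹'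
      Set.univ.pi fun i => Set.Ioo (x i - r) (x i + r) := by
  ext y
  simp only [cube, Set.mem_ofPred_eq, Set.mem_preimage, MeasurableEquiv.coe_toLp_symm,
    Set.mem_univ_pi, Set.mem_Ioo, abs_sub_lt_iff, sub_lt_comm, sub_lt_iff_lt_add', and_comm,
    add_comm]

theorem closedCube_eq_preimage_pi (x : ℝ³) (r : ℝ) :
    closedCube x r = (MeasurableEquiv.toLp 2 (Fin 3 → ℝ)).symm ⁻¹'
      Set.univ.pi fun i => Set.Icc (x i - r) (x i + r) := by
  ext y
  simp only [closedCube, Set.mem_ofPred_eq, Set.mem_preimage, MeasurableEquiv.coe_toLp_symm,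
    Set.mem_univ_pi, Set.mem_Icc, abs_sub_le_iff, sub_le_comm, sub_le_iff_le_add', and_comm,
    add_comm]

theorem measurableSet_cube (x : ℝ³) (r : ℝ) : MeasurableSet (cube x r) := by
  rw [cube_eq_preimage_pi]
  exact MeasurableEquiv.measurable _ (MeasurableSet.univ_pi fun _ => measurableSet_Ioo)

theorem volume_cube (x : ℝ³) (r : ℝ) : volume (cube x r) = ENNReal.ofReal (2 * r) ^ 3 := by
  rw [cube_eq_preimage_pi,
    (EuclideanSpace.volume_preserving_symm_measurableEquiv_toLp (Fin 3)).measure_preimage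
      (MeasurableSet.univ_pi fun _ => measurableSet_Ioo).nullMeasurableSet, volume_pi_pi]
  simp [Real.volume_Ioo, two_mul]

theorem volume_closedCube (x : ℝ³) (r : ℝ) :
    volume (closedCube x r) = ENNReal.ofReal (2 * r) ^ 3 := by
  rw [closedCube_eq_preimage_pi,
    (EuclideanSpace.volume_preserving_symm_measurableEquiv_toLp (Fin 3)).measure_preimage
      (MeasurableSet.univ_pi fun _ => measurableSet_Icc).nullMeasurableSet, volume_pi_pi]
  simp [Real.volume_Icc, two_mul]

theorem volume_cube_ne_top (x : ℝ³) (r : ℝ) : volume (cube x r) ≠ ⊤ := by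
  rw [volume_cube]; exact ENNReal.pow_ne_top ENNReal.ofReal_ne_top

theorem volume_closedCube_ne_top (x : ℝ³) (r : ℝ) : volume (closedCube x r) ≠ ⊤ := by
  rw [volume_closedCube]; exact ENNReal.pow_ne_top ENNReal.ofReal_ne_top

theorem volume_real_cube (x : ℝ³) {r : ℝ} (hr : 0 ≤ r) :
    volume.real (cube x r) = (2 * r) ^ 3 := by
  rw [measureReal_def, volume_cube, ENNReal.toReal_pow, ENNReal.toReal_ofReal (by positivity)]

theorem cube_subset_closedCube (x : ℝ³) (r : ℝ) : cube x r ⊆ closedCube x r :=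
  fun _ hy i => (hy i).le

theorem cube_ae_eq_closedCube (x : ℝ³) (r : ℝ) : cube x r =ᵐ[volume] closedCube x r :=
  ae_eq_of_subset_of_measure_ge (cube_subset_closedCube x r)
    (by rw [volume_cube, volume_closedCube]) (measurableSet_cube x r).nullMeasurableSet
    (volume_closedCube_ne_top x r)

theorem cube_subset_cube {a b : ℝ³} {r R : ℝ} (h : ∀ i, |a i - b i| ≤ R - r) :
    cube a r ⊆ cube b R := fun y hy i => by
  linarith [abs_sub_le (y i) (a i) (b i), hy i, h i]

theorem closedCube_subset_closedCube {a b : ℝ³} {r R : ℝ} (h : ∀ i, |a i - b i| ≤ R - r) :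
    closedCube a r ⊆ closedCube b R := fun y hy i => by
  linarith [abs_sub_le (y i) (a i) (b i), hy i, h i]

theorem closedCube_subset_closedBall (x : ℝ³) (r : ℝ) :
    closedCube x r ⊆ closedBall x (2 * r) := by
  intro y hy
  have hsq : ∀ i, (y i - x i) ^ 2 ≤ r ^ 2 := fun i =>
    sq_le_sq' (abs_le.1 (hy i)).1 (abs_le.1 (hy i)).2
  have hr : 0 ≤ r := (abs_nonneg _).trans (hy 0)
  rw [mem_closedBall, dist_eq_norm, EuclideanSpace.norm_eq, Real.sqrt_le_left (by positivity),
    Fin.sum_univ_three]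
  simp only [PiLp.sub_apply, Real.norm_eq_abs, sq_abs]
  linarith [hsq 0, hsq 1, hsq 2, sq_nonneg r]

variable {u : ℝ³ → ℝ}

theorem integrableOn_closedCube (hu : LocallyIntegrable u volume) (x : ℝ³) (r : ℝ) :
    IntegrableOn u (closedCube x r) volume :=
  (hu.integrableOn_isCompact (isCompact_closedBall x (2 * r))).mono_set
    (closedCube_subset_closedBall x r)

theorem integrableOn_cube (hu : LocallyIntegrable u volume) (x : ℝ³) (r : ℝ) :
    IntegrableOn u (cube x r) volume :=
  (integrableOn_closedCube hu x r).mono_set (cube_subset_closedCube x r)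

end Cubes

/-- Not normalized: the integral, not the average, of `|u - (u)_{Q_r(x)}|` over `Q_r(x)`. -/
def meanOsc (u : ℝ³ → ℝ) (x : ℝ³) (r : ℝ) : ℝ :=
  ∫ y in cube x r, |u y - ⨍ z in cube x r, u z|

def octantCenter (x : ℝ³) (s : ℝ) (b : Fin 3 → Bool) : ℝ³ :=
  WithLp.toLp 2 fun i => if b i then x i + s else x i - s

theorem octantCenter_apply (x : ℝ³) (s : ℝ) (b : Fin 3 → Bool) (i : Fin 3) :
    octantCenter x s b i = if b i then x i + s else x i - s := rfl

theorem abs_octantCenter_sub (x : ℝ³) (s : ℝ) (b : Fin 3 → Bool) (i : Fin 3) :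
    |octantCenter x s b i - x i| = |s| := by
  rw [octantCenter_apply]; split_ifs <;> simp [abs_neg]

theorem abs_octantCenter_sub_octantCenter (x : ℝ³) (s t : ℝ) (b : Fin 3 → Bool) (i : Fin 3) :
    |octantCenter x s b i - octantCenter x t b i| = |s - t| := by
  rw [octantCenter_apply, octantCenter_apply]
  split_ifs
  · ring_nf
  · rw [← abs_neg]; ring_nf

theorem cube_subset_iUnion_closedCube_octantCenter (x : ℝ³) (s : ℝ) :
    cube x (2 * s) ⊆ ⋃ b, closedCube (octantCenter x s b) s := by
  intro y hy
  refine Set.mem_iUnion.2 ⟨fun i => decide (x i ≤ y i), fun i => ?_⟩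
  have := abs_lt.1 (hy i)
  rw [octantCenter_apply, abs_le]
  split_ifs with hxy <;> simp only [decide_eq_true_eq] at hxy <;> constructor <;> linarith

section MeanOscillation

variable {u : ℝ³ → ℝ}

theorem mul_abs_average_cube_sub_le_meanOsc (hu : LocallyIntegrable u volume) {x y : ℝ³}
    {r s : ℝ} (hr : 0 ≤ r) (hyx : cube y r ⊆ cube x s) :
    (2 * r) ^ 3 * |(⨍ z in cube y r, u z) - ⨍ z in cube x s, u z| ≤ meanOsc u x s := by
  rw [← volume_real_cube y hr]
  exact measureReal_mul_abs_setAverage_sub_le hyx (volume_cube_ne_top x s)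
    (integrableOn_cube hu x s) _

theorem mul_abs_average_cube_sub_average_cube_le (hu : LocallyIntegrable u volume)
    {a b m : ℝ³} {s : ℝ} (hs : 0 ≤ s) (hma : cube m (s / 2) ⊆ cube a s)
    (hmb : cube m (s / 2) ⊆ cube b s) :
    s ^ 3 * |(⨍ z in cube a s, u z) - ⨍ z in cube b s, u z|
      ≤ meanOsc u a s + meanOsc u b s := by
  have ha := mul_abs_average_cube_sub_le_meanOsc hu (by linarith) hma
  have hb := mul_abs_average_cube_sub_le_meanOsc hu (by linarith) hmb
  rw [show 2 * (s / 2) = s by ring] at ha hb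
  calc s ^ 3 * |(⨍ z in cube a s, u z) - ⨍ z in cube b s, u z|
      ≤ s ^ 3 * (|(⨍ z in cube m (s / 2), u z) - ⨍ z in cube a s, u z|
          + |(⨍ z in cube m (s / 2), u z) - ⨍ z in cube b s, u z|) := by
        gcongr
        rw [abs_sub_comm (⨍ z in cube m (s / 2), u z)]
        exact abs_sub_le _ _ _
    _ ≤ meanOsc u a s + meanOsc u b s := by linarith

theorem setIntegral_cube_octantCenter_abs_sub_average_le (hu : LocallyIntegrable u volume)
    (x : ℝ³) {s : ℝ} (hs : 0 ≤ s) (b : Fin 3 → Bool) :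
    ∫ z in cube (octantCenter x s b) s, |u z - ⨍ y in cube x s, u y|
      ≤ 9 * meanOsc u (octantCenter x s b) s + 8 * meanOsc u x s := by
  set a := octantCenter x s b
  have hcommon : s ^ 3 * |(⨍ y in cube a s, u y) - ⨍ y in cube x s, u y|
      ≤ meanOsc u a s + meanOsc u x s := by
    refine mul_abs_average_cube_sub_average_cube_le hu hs (m := octantCenter x (s / 2) b)
      (cube_subset_cube fun i => ?_) (cube_subset_cube fun i => ?_)
    · rw [abs_octantCenter_sub_octantCenter, abs_of_nonpos (by linarith)]; linarith
    · rw [abs_octantCenter_sub, abs_of_nonneg (by linarith)]; linarith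
  calc ∫ z in cube a s, |u z - ⨍ y in cube x s, u y|
      ≤ meanOsc u a s
          + volume.real (cube a s) * |(⨍ y in cube a s, u y) - ⨍ y in cube x s, u y| :=
        setIntegral_abs_sub_le_add (volume_cube_ne_top a s) (integrableOn_cube hu a s) _ _
    _ ≤ 9 * meanOsc u a s + 8 * meanOsc u x s := by
        rw [volume_real_cube a hs]; linarith

theorem meanOsc_two_mul_le (hu : LocallyIntegrable u volume) (x : ℝ³) {s δ : ℝ} (hs : 0 ≤ s)
    (hoct : ∀ b, meanOsc u (octantCenter x s b) s ≤ δ) (hx : meanOsc u x s ≤ δ) :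
    meanOsc u x (2 * s) ≤ 272 * δ := by
  set c := ⨍ y in cube x s, u y
  calc meanOsc u x (2 * s) ≤ 2 * ∫ z in cube x (2 * s), |u z - c| :=
        setIntegral_abs_sub_setAverage_le (volume_cube_ne_top x _) (integrableOn_cube hu x _) c
    _ ≤ 2 * ∑ b, ∫ z in closedCube (octantCenter x s b) s, |u z - c| := by
        gcongr
        exact setIntegral_le_sum_of_subset_iUnion (cube_subset_iUnion_closedCube_octantCenter x s)
          (fun _ => abs_nonneg _) fun b => integrableOn_abs_sub_const
            (volume_closedCube_ne_top _ s) (integrableOn_closedCube hu _ s) c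
    _ = 2 * ∑ b, ∫ z in cube (octantCenter x s b) s, |u z - c| := by
        simp only [setIntegral_congr_set (cube_ae_eq_closedCube _ s)]
    _ ≤ 2 * ∑ _b : Fin 3 → Bool, (9 * δ + 8 * δ) := by
        gcongr with b
        linarith [setIntegral_cube_octantCenter_abs_sub_average_le hu x hs b, hoct b]
    _ = 272 * δ := by norm_num [Fintype.card_fun]; ring

theorem meanOsc_two_pow_le (hu : LocallyIntegrable u volume) {δ : ℝ} (j : ℕ) {x : ℝ³}
    (hx : closedCube x (2 ^ j) ⊆ {z | meanOsc u z 1 ≤ δ}) :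
    meanOsc u x (2 ^ j) ≤ 272 ^ j * δ := by
  induction j generalizing x with
  | zero => simpa using hx fun i => by simp
  | succ j ih =>
    have hsub {y : ℝ³} (hy : ∀ i, |y i - x i| ≤ 2 ^ j) :
        closedCube y (2 ^ j) ⊆ {z | meanOsc u z 1 ≤ δ} :=
      (closedCube_subset_closedCube fun i => by rw [pow_succ]; linarith [hy i]).trans hx
    rw [pow_succ', pow_succ', mul_assoc]
    refine meanOsc_two_mul_le hu x (by positivity) (fun b => ih (hsub fun i => ?_))
      (ih (hsub fun i => by simp))
    rw [abs_octantCenter_sub, abs_of_pos (by positivity)]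

end MeanOscillation

theorem average_nearby_cubes_decay_general
    (u : EuclideanSpace ℝ (Fin 3) → ℝ) (hu : LocallyIntegrable u volume)
    (hosc : Tendsto (fun x0 : EuclideanSpace ℝ (Fin 3) =>
        ∫ y in cube x0 1, |u y - ⨍ z in cube x0 1, u z|)
      (cocompact (EuclideanSpace ℝ (Fin 3))) (nhds 0))
    (r : ℝ) (hr : 0 < r) :
    ∀ ε > 0, ∃ ρ : ℝ, ∀ x0 : EuclideanSpace ℝ (Fin 3), ρ ≤ ‖x0‖ →
      ∀ y ∈ closedCube x0 (2 * r),
        |(⨍ z in cube y r, u z) - ⨍ z in cube x0 r, u z| < ε := by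
  intro ε hε
  obtain ⟨n, hn⟩ := pow_unbounded_of_one_lt (3 * r) one_lt_two
  set s : ℝ := 2 ^ n
  obtain ⟨δ, hδ, hδε⟩ : ∃ δ > 0, 272 ^ n * δ = ε / 3 * (2 * r) ^ 3 :=
    ⟨_, by positivity, mul_div_cancel₀ _ (by positivity)⟩
  obtain ⟨R, -, hR⟩ := hasBasis_cobounded_norm.eventually_iff.1 <|
    cobounded_eq_cocompact (α := ℝ³) ▸ hosc.eventually (ge_mem_nhds hδ)
  refine ⟨R + 2 * s, fun x0 hx0 => ?_⟩
  have hbig : meanOsc u x0 s ≤ ε / 3 * (2 * r) ^ 3 := by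
    refine (meanOsc_two_pow_le hu n fun z hz => hR ?_).trans_eq hδε
    have hzx0 := closedCube_subset_closedBall x0 s hz
    rw [mem_closedBall, dist_eq_norm] at hzx0
    show R ≤ ‖z‖
    linarith [norm_sub_norm_le x0 z, norm_sub_rev x0 z]
  have hnear : ∀ w ∈ closedCube x0 (2 * r),
      |(⨍ z in cube w r, u z) - ⨍ z in cube x0 s, u z| ≤ ε / 3 := fun w hw => by
    have := (mul_abs_average_cube_sub_le_meanOsc hu hr.le
      (cube_subset_cube fun i => by linarith [hw i])).trans hbig
    exact le_of_mul_le_mul_left (by linarith) (by positivity : (0 : ℝ) < (2 * r) ^ 3)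
  intro y hy
  have hx0 : x0 ∈ closedCube x0 (2 * r) := fun i => by rw [sub_self, abs_zero]; positivity
  calc |(⨍ z in cube y r, u z) - ⨍ z in cube x0 r, u z|
      ≤ |(⨍ z in cube y r, u z) - ⨍ z in cube x0 s, u z|
        + |(⨍ z in cube x0 s, u z) - ⨍ z in cube x0 r, u z| := abs_sub_le _ _ _
    _ < ε := by
        rw [abs_sub_comm (⨍ z in cube x0 s, u z)]
        linarith [hnear y hy, hnear x0 hx0]

/-- If `u ∈ L¹_uloc(ℝ³)` has decaying mean oscillation over unit cubes, then for every
`r > 0` the averages of `u` over nearby cubes `Q_r(y)`, `y ∈ Q̄_{2r}(x₀)`, become uniformly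
close to the average over `Q_r(x₀)` as `|x₀| → ∞`. -/
theorem average_nearby_cubes_decay
    (u : EuclideanSpace ℝ (Fin 3) → ℝ) (hu : LocallyIntegrable u volume)
    (huloc : ∃ M : ℝ, ∀ z : EuclideanSpace ℝ (Fin 3), ∫ y in ball z 1, |u y| ≤ M)
    (hosc : Tendsto (fun x0 : EuclideanSpace ℝ (Fin 3) =>
        ∫ y in cube x0 1, |u y - ⨍ z in cube x0 1, u z|)
      (cocompact (EuclideanSpace ℝ (Fin 3))) (nhds 0))
    (r : ℝ) (hr : 0 < r) :
    ∀ ε > 0, ∃ ρ : ℝ, ∀ x0 : EuclideanSpace ℝ (Fin 3), ρ ≤ ‖x0‖ →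
      ∀ y ∈ closedCube x0 (2 * r),
        |(⨍ z in cube y r, u z) - ⨍ z in cube x0 r, u z| < ε :=
  average_nearby_cubes_decay_general u hu hosc r hr
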